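/- Let A : ℝ → Matrix (Fin n) (Fin n) ℝ be a continuous family of real n × n matrices, and let λ : ℝ → ℂ be continuous with λ(ε) an eigenvalue of A(ε) (as a complex matrix) for all ε ∈ [−a, b], where a, b > 0. Suppose λ(ε) is real for all ε ∈ [−a, 0] and λ(ε) is non-real for all ε ∈ (0, b]. Then λ(0) is a root of multiplicity at least 2 of the characteristic polynomial of A(0); i.e. (X − λ(0))² divides charpoly(A(0)) over ℂ. -/

import Mathlib

/-!
The characteristic polynomial `p_ε` of `A(ε)` has real coefficients, so for `ε ∈ (0, b]` both
`λ(ε)` and `conj λ(ε)` are roots of `p_ε`, and they are distinct. Hence the divided difference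
`(p_ε(λ) - p_ε(conj λ)) / (λ - conj λ)` vanishes there. Written as a polynomial expression in
`λ`, `conj λ` and the coefficients of `p_ε`, it depends continuously on `ε`, so it also vanishes at
`ε = 0`, where `λ(0)` is real and the divided difference is `p_0'(λ(0))`. A root of both `p_0`
and `p_0'` is a multiple root.
-/

open Polynomial Finset ComplexConjugate

namespace Polynomial

variable {R : Type*} [CommRing R]

def divDiff (p : R[X]) (x y : R) : R :=
  p.sum fun k c => c * ∑ j ∈ range k, x ^ j * y ^ (k - 1 - j)

theorem divDiff_mul_sub (p : R[X]) (x y : R) :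
    divDiff p x y * (x - y) = p.eval x - p.eval y := by
  simp only [divDiff, Polynomial.sum, eval_eq_sum, Finset.sum_mul, ← Finset.sum_sub_distrib]
  refine Finset.sum_congr rfl fun k _ => ?_
  rw [mul_assoc, geom_sum₂_mul, mul_sub]

theorem divDiff_self (p : R[X]) (x : R) : divDiff p x x = p.derivative.eval x := by
  simp only [divDiff, derivative_eval, geom_sum₂_self, mul_assoc]

theorem divDiff_eq_zero_of_isRoot [NoZeroDivisors R] {p : R[X]} {x y : R} (hx : p.IsRoot x)
    (hy : p.IsRoot y) (hxy : x ≠ y) : divDiff p x y = 0 := by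
  have h := divDiff_mul_sub p x y
  rw [hx.eq_zero, hy.eq_zero, sub_zero, mul_eq_zero] at h
  exact h.resolve_right (sub_ne_zero.2 hxy)

theorem continuous_divDiff {T : Type*} [TopologicalSpace T] [TopologicalSpace R]
    [IsTopologicalRing R] {p : T → R[X]} {N : ℕ} (hp : ∀ k, Continuous fun t => (p t).coeff k)
    (hN : ∀ t, (p t).natDegree < N) {f g : T → R} (hf : Continuous f) (hg : Continuous g) :
    Continuous fun t => divDiff (p t) (f t) (g t) := by
  have h : ∀ t, divDiff (p t) (f t) (g t) =
      ∑ k ∈ range N, (p t).coeff k * ∑ j ∈ range k, f t ^ j * g t ^ (k - 1 - j) :=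
    fun t => sum_over_range' _ (fun k => by simp) N (hN t)
  simp only [h]
  fun_prop

theorem sq_dvd_of_isRoot_derivative {p : R[X]} {t : R} (hp : p ≠ 0) (h : p.IsRoot t)
    (h' : p.derivative.IsRoot t) : (X - C t) ^ 2 ∣ p :=
  (le_rootMultiplicity_iff hp).1 ((one_lt_rootMultiplicity_iff_isRoot hp).2 ⟨h, h'⟩)

end Polynomial

namespace Matrix

theorem continuous_charpoly_coeff {T R n : Type*} [TopologicalSpace T] [CommRing R]
    [TopologicalSpace R] [IsTopologicalRing R] [Fintype n] [DecidableEq n]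
    {A : T → Matrix n n R} (hA : Continuous A) (k : ℕ) :
    Continuous fun x => (A x).charpoly.coeff k := by
  have h : ∀ x, (A x).charpoly.coeff k =
      MvPolynomial.eval (fun ij : n × n => A x ij.1 ij.2) ((charpoly.univ R n).coeff k) := by
    intro x
    rw [MvPolynomial.eval, charpoly.univ_coeff_eval₂Hom]
    rfl
  simp only [h]
  exact (MvPolynomial.continuous_eval _).comp <| continuous_pi fun ij =>
    (continuous_apply_apply ij.1 ij.2).comp hA

theorem isRoot_charpoly_map_ofReal_conj {n : Type*} [Fintype n] [DecidableEq n]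
    (M : Matrix n n ℝ) {z : ℂ} (hz : (M.map Complex.ofReal).charpoly.IsRoot z) :
    (M.map Complex.ofReal).charpoly.IsRoot (conj z) := by
  have h : ∀ w, (M.map Complex.ofReal).charpoly.eval w = aeval w M.charpoly := fun w => by
    rw [← eval_map_algebraMap, ← charpoly_map]; rfl
  rw [IsRoot, h] at hz ⊢
  rw [aeval_conj, hz, map_zero]

end Matrix

/-- Theorem 3(b): if a continuous eigenvalue branch of a continuous family of real matrices
is real on `[-a, 0]` and non-real on `(0, b]`, then at `ε = 0` a multiple eigenvalue occurs:
`(X - λ(0))²` divides the characteristic polynomial of `A(0)` over `ℂ`. -/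
theorem multiple_eigenvalue_at_transition
    (n : ℕ) (A : ℝ → Matrix (Fin n) (Fin n) ℝ)
    (hA : ∀ i j, Continuous fun ε => A ε i j)
    (a b : ℝ) (ha : 0 < a) (hb : 0 < b)
    (lam : ℝ → ℂ) (hcont : Continuous lam)
    (heig : ∀ ε ∈ Set.Icc (-a) b, (((A ε).map (Complex.ofReal)).charpoly).IsRoot (lam ε))
    (hrealside : ∀ ε ∈ Set.Icc (-a) 0, (lam ε).im = 0)
    (hcomplexside : ∀ ε ∈ Set.Ioc 0 b, (lam ε).im ≠ 0) :
    (X - C (lam 0)) ^ 2 ∣ ((A 0).map (Complex.ofReal)).charpoly := by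
  set p : ℝ → ℂ[X] := fun ε => ((A ε).map Complex.ofReal).charpoly
  have hAc : Continuous fun ε => (A ε).map Complex.ofReal :=
    (continuous_matrix hA).matrix_map Complex.continuous_ofReal
  have hdeg : ∀ ε, (p ε).natDegree < n + 1 := fun ε => by
    simp [p, Matrix.charpoly_natDegree_eq_dim]
  have hF : Continuous fun ε => divDiff (p ε) (lam ε) (conj (lam ε)) :=
    continuous_divDiff (Matrix.continuous_charpoly_coeff hAc) hdeg hcont
      (Complex.continuous_conj.comp hcont)
  have hF_pos : Set.EqOn (fun ε => divDiff (p ε) (lam ε) (conj (lam ε))) 0 (Set.Ioc 0 b) :=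
    fun ε hε => by
      have hroot := heig ε ⟨by linarith [hε.1], hε.2⟩
      exact divDiff_eq_zero_of_isRoot hroot (Matrix.isRoot_charpoly_map_ofReal_conj _ hroot)
        fun h => hcomplexside ε hε (Complex.conj_eq_iff_im.1 h.symm)
  have hF_zero : divDiff (p 0) (lam 0) (conj (lam 0)) = 0 :=
    hF_pos.closure hF continuous_const (by rw [closure_Ioc hb.ne]; exact ⟨le_rfl, hb.le⟩)
  rw [Complex.conj_eq_iff_im.2 (hrealside 0 ⟨by linarith, le_rfl⟩), divDiff_self] at hF_zero
  exact sq_dvd_of_isRoot_derivative (Matrix.charpoly_monic _).ne_zero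
    (heig 0 ⟨by linarith, hb.le⟩) hF_zero
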